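/- arXiv:2307.04990 — 2 statements merged into one kernel-verified Lean document; each statement's English description precedes it below -/
import Mathlib

section
/- Let α ∈ (0,1) and x ∈ ℝ^k, and let z* be the unique minimizer of P_α(x, ·) over Δ_k. Then there exists a unique λ ∈ ℝ such that (1−α) z*_i + α log z*_i = x_i − α + λ for every i. Conversely, if z ∈ ℝ^k satisfies z_i > 0 for all i, Σ_i z_i = 1, and there exists λ ∈ ℝ with (1−α) z_i + α log z_i = x_i − α + λ for all i, then z = z*. -/
/-- The probability simplex Δ_k in ℝ^k. -/
def simplex (k : ℕ) : Set (Fin k → ℝ) :=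
  {z | (∀ i, 0 ≤ z i) ∧ ∑ i, z i = 1}

/-- The prox objective `P_α(x, z) = (1/2)‖x − z‖₂² + α Σ_i z_i log z_i − (α/2)‖z‖₂²`.
(Note `Real.log 0 = 0`, giving the convention `0 · log 0 = 0`.) -/
noncomputable def proxObj {k : ℕ} (α : ℝ) (x z : Fin k → ℝ) : ℝ :=
  (1 / 2) * ∑ i, (x i - z i) ^ 2 + α * ∑ i, z i * Real.log (z i)
    - (α / 2) * ∑ i, (z i) ^ 2

noncomputable def Faux (α a t : ℝ) : ℝ :=
  (1 / 2) * (a - t) ^ 2 + α * (t * Real.log t) - (α / 2) * t ^ 2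

noncomputable def Gaux (α a s : ℝ) : ℝ :=
  (1 - α) * s + α * Real.log s - a + α

lemma proxObj_eq {k : ℕ} (α : ℝ) (x z : Fin k → ℝ) :
    proxObj α x z = ∑ i, Faux α (x i) (z i) := by
  unfold proxObj Faux
  rw [Finset.mul_sum, Finset.mul_sum, Finset.mul_sum, ← Finset.sum_add_distrib,
    ← Finset.sum_sub_distrib]

lemma ent_ineq {s t : ℝ} (hs : 0 < s) (ht : 0 ≤ t) :
    s * Real.log s + (Real.log s + 1) * (t - s) ≤ t * Real.log t := by
  rcases ht.lt_or_eq with h | h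
  · have hd : Real.log s - Real.log t ≤ s / t - 1 := by
      rw [← Real.log_div hs.ne' h.ne']
      exact Real.log_le_sub_one_of_pos (div_pos hs h)
    have h1 := mul_le_mul_of_nonneg_left hd h.le
    have h2 : t * (s / t - 1) = s - t := by field_simp
    nlinarith
  · rw [← h]
    simp
    nlinarith [hs]

lemma grad_ineq {α a s t : ℝ} (hα0 : 0 < α) (hα1 : α < 1) (hs : 0 < s) (ht : 0 ≤ t) :
    Faux α a s + Gaux α a s * (t - s) ≤ Faux α a t := by
  have he := ent_ineq hs ht
  unfold Faux Gaux
  nlinarith [sq_nonneg (t - s), mul_le_mul_of_nonneg_left he hα0.le]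

lemma mid_lt {α a s t : ℝ} (hα0 : 0 < α) (hα1 : α < 1) (hs : 0 ≤ s) (ht : 0 ≤ t)
    (hne : t ≠ s) : Faux α a ((t + s) / 2) < (Faux α a t + Faux α a s) / 2 := by
  have hts : 0 < t + s := by
    rcases ht.lt_or_eq with h | h
    · linarith
    · rcases hs.lt_or_eq with h2 | h2
      · linarith
      · exact absurd (by rw [← h, ← h2]) hne
  have hm : 0 < (t + s) / 2 := by linarith
  have e1 := ent_ineq hm ht
  have e2 := ent_ineq hm hs
  have hq : 0 < (t - s) ^ 2 := by
    have : t - s ≠ 0 := sub_ne_zero.mpr hne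
    positivity
  unfold Faux
  nlinarith [mul_le_mul_of_nonneg_left e1 hα0.le, mul_le_mul_of_nonneg_left e2 hα0.le]

lemma mid_le {α a s t : ℝ} (hα0 : 0 < α) (hα1 : α < 1) (hs : 0 ≤ s) (ht : 0 ≤ t) :
    Faux α a ((t + s) / 2) ≤ (Faux α a t + Faux α a s) / 2 := by
  by_cases h : t = s
  · subst h
    have : (t + t) / 2 = t := by ring
    rw [this]; linarith
  · exact (mid_lt hα0 hα1 hs ht h).le

lemma Faux_hasDerivAt {α a s : ℝ} (hs : s ≠ 0) :
    HasDerivAt (fun t => Faux α a t) (Gaux α a s) s := by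
  have h1 : HasDerivAt (fun t : ℝ => (1 / 2) * (a - t) ^ 2)
      ((1 / 2) * (2 * (a - s) ^ 1 * (-1))) s :=
    (((hasDerivAt_id s).const_sub a).pow 2).const_mul (1 / 2)
  have h2 : HasDerivAt (fun t : ℝ => α * (t * Real.log t)) (α * (Real.log s + 1)) s :=
    (Real.hasDerivAt_mul_log hs).const_mul α
  have h3 : HasDerivAt (fun t : ℝ => (α / 2) * t ^ 2) ((α / 2) * (2 * s ^ 1)) s := by
    simpa using (hasDerivAt_pow 2 s).const_mul (α / 2)
  have := (h1.add h2).sub h3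
  refine HasDerivAt.congr_deriv this ?_
  unfold Gaux
  ring

lemma sum_diff_pair {k : ℕ} (f : Fin k → ℝ) {i j : Fin k} (hij : i ≠ j)
    (h : ∀ m, m ≠ i → m ≠ j → f m = 0) : ∑ m, f m = f i + f j := by
  rw [← Finset.sum_pair hij]
  refine (Finset.sum_subset (Finset.subset_univ _) ?_).symm
  intro m _ hm
  simp only [Finset.mem_insert, Finset.mem_singleton, not_or] at hm
  exact h m hm.1 hm.2

theorem stmt9 {k : ℕ} (hk : 0 < k) (α : ℝ) (hα : α ∈ Set.Ioo (0 : ℝ) 1)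
    (x : Fin k → ℝ) (z : Fin k → ℝ) (hz : z ∈ simplex k)
    (hmin : ∀ w ∈ simplex k, proxObj α x z ≤ proxObj α x w) :
    (∃! lam : ℝ, ∀ i, (1 - α) * z i + α * Real.log (z i) = x i - α + lam) ∧
    (∀ w : Fin k → ℝ, (∀ i, 0 < w i) → (∑ i, w i) = 1 →
      (∃ lam : ℝ, ∀ i, (1 - α) * w i + α * Real.log (w i) = x i - α + lam) →
      w = z) := by
  obtain ⟨hα0, hα1⟩ := hα
  obtain ⟨hz0, hz1⟩ := hz
  -- Step 1 : positivity of the minimizer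
  have hpos : ∀ i, 0 < z i := by
    intro i
    rcases (hz0 i).lt_or_eq with h | h
    · exact h
    exfalso
    obtain ⟨j, hj⟩ : ∃ j, 0 < z j := by
      by_contra hc
      push_neg at hc
      have h0 : ∑ m, z m = 0 :=
        Finset.sum_eq_zero fun m _ => le_antisymm (hc m) (hz0 m)
      rw [hz1] at h0; norm_num at h0
    have hij : i ≠ j := by rintro rfl; rw [← h] at hj; exact lt_irrefl _ hj
    set c := z j with hc
    set ε := min (c / 2) (Real.exp (Real.log (c / 2) + (x i - x j) / α)) with hεdef
    have hε0 : 0 < ε := lt_min (by linarith) (Real.exp_pos _)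
    have hεc : ε ≤ c / 2 := min_le_left _ _
    have hlog : Real.log ε ≤ Real.log (c / 2) + (x i - x j) / α := by
      calc Real.log ε ≤ Real.log (Real.exp (Real.log (c / 2) + (x i - x j) / α)) :=
            Real.log_le_log hε0 (min_le_right _ _)
        _ = _ := Real.log_exp _
    set w : Fin k → ℝ := fun m => if m = i then ε else if m = j then c - ε else z m with hw
    have hwz : ∀ m, m ≠ i → m ≠ j → w m = z m := by
      intro m h1 h2; simp [hw, h1, h2]
    have hwi : w i = ε := by simp [hw]
    have hwj : w j = c - ε := by simp [hw, Ne.symm hij]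
    have hwsum : ∑ m, w m = 1 := by
      have hd : ∑ m, (w m - z m) = (w i - z i) + (w j - z j) :=
        sum_diff_pair _ hij fun m h1 h2 => by rw [hwz m h1 h2]; ring
      rw [Finset.sum_sub_distrib, hz1] at hd
      rw [hwi, hwj, ← h, ← hc] at hd
      have : ∑ m, w m - 1 = 0 := by rw [hd]; ring
      linarith
    have hwmem : w ∈ simplex k := by
      refine ⟨fun m => ?_, hwsum⟩
      by_cases h1 : m = i
      · rw [h1, hwi]; linarith
      by_cases h2 : m = j
      · rw [h2, hwj]; linarith
      · rw [hwz m h1 h2]; exact hz0 m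
    have hdiff : proxObj α x w - proxObj α x z =
        (Faux α (x i) ε - Faux α (x i) 0) + (Faux α (x j) (c - ε) - Faux α (x j) c) := by
      rw [proxObj_eq, proxObj_eq, ← Finset.sum_sub_distrib,
        sum_diff_pair _ hij fun m h1 h2 => by rw [hwz m h1 h2]; ring]
      rw [hwi, hwj, ← h, ← hc]
    -- bound the difference
    have hce : (0 : ℝ) < c - ε := by linarith
    have ent := ent_ineq hce (by linarith : (0:ℝ) ≤ c)
    have lm : Real.log (c / 2) ≤ Real.log (c - ε) :=
      Real.log_le_log (by linarith) (by linarith)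
    have F1 : α * ((c - ε) * Real.log (c - ε) - c * Real.log c) ≤
        -(α * (ε * (Real.log (c / 2) + 1))) := by
      nlinarith [mul_le_mul_of_nonneg_left ent hα0.le,
        mul_le_mul_of_nonneg_left (mul_le_mul_of_nonneg_left lm hε0.le) hα0.le]
    have hlog' : α * Real.log ε ≤ α * Real.log (c / 2) + (x i - x j) := by
      have h' := mul_le_mul_of_nonneg_left hlog hα0.le
      have hcalc : α * ((x i - x j) / α) = x i - x j := by field_simp
      rw [mul_add, hcalc] at h'
      exact h'
    have F2 : ε * (α * Real.log ε) ≤ ε * (α * Real.log (c / 2) + (x i - x j)) :=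
      mul_le_mul_of_nonneg_left hlog' hε0.le
    have F3 : (1 - α) * (ε * (ε - c)) ≤ 0 :=
      mul_nonpos_of_nonneg_of_nonpos (by linarith)
        (mul_nonpos_of_nonneg_of_nonpos hε0.le (by linarith))
    have hneg : proxObj α x w - proxObj α x z < 0 := by
      rw [hdiff]
      unfold Faux
      have hl0 : Real.log (0:ℝ) = 0 := Real.log_zero
      rw [hl0]
      nlinarith [F1, F2, F3, hε0, mul_pos hα0 hε0]
    have := hmin w hwmem
    linarith
  -- Step 2 : stationarity
  have hstat : ∀ i j : Fin k, Gaux α (x i) (z i) = Gaux α (x j) (z j) := by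
    intro i j
    by_cases hij : i = j
    · rw [hij]
    set w : ℝ → Fin k → ℝ :=
      fun t m => if m = i then z i + t else if m = j then z j - t else z m with hw
    have hwz : ∀ t, ∀ m, m ≠ i → m ≠ j → w t m = z m := by
      intro t m h1 h2; simp [hw, h1, h2]
    have hwi : ∀ t, w t i = z i + t := by intro t; simp [hw]
    have hwj : ∀ t, w t j = z j - t := by intro t; simp [hw, Ne.symm hij]
    have hkey : ∀ t, proxObj α x (w t) =
        (Faux α (x i) (z i + t) + Faux α (x j) (z j - t)) +
        (proxObj α x z - Faux α (x i) (z i) - Faux α (x j) (z j)) := by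
      intro t
      have hd : ∑ m, (Faux α (x m) (w t m) - Faux α (x m) (z m)) =
          (Faux α (x i) (w t i) - Faux α (x i) (z i)) +
          (Faux α (x j) (w t j) - Faux α (x j) (z j)) :=
        sum_diff_pair _ hij fun m h1 h2 => by rw [hwz t m h1 h2]; ring
      rw [Finset.sum_sub_distrib, ← proxObj_eq, ← proxObj_eq, hwi, hwj] at hd
      linarith
    have hm0 : (0 : ℝ) < min (z i) (z j) := lt_min (hpos i) (hpos j)
    have hmem : ∀ t : ℝ, |t| < min (z i) (z j) → w t ∈ simplex k := by
      intro t ht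
      obtain ⟨ht1, ht2⟩ := abs_lt.mp ht
      have hti : -(z i) < t := by
        have := min_le_left (z i) (z j); linarith
      have htj : t < z j := lt_of_lt_of_le ht2 (min_le_right _ _)
      constructor
      · intro m
        by_cases h1 : m = i
        · rw [h1, hwi]; linarith
        by_cases h2 : m = j
        · rw [h2, hwj]; linarith
        · rw [hwz t m h1 h2]; exact hz0 m
      · have hd : ∑ m, (w t m - z m) = (w t i - z i) + (w t j - z j) :=
          sum_diff_pair _ hij fun m h1 h2 => by rw [hwz t m h1 h2]; ring
        rw [Finset.sum_sub_distrib, hz1, hwi, hwj] at hd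
        have : ∑ m, w t m - 1 = 0 := by rw [hd]; ring
        linarith
    have hw0 : w 0 = z := by
      funext m
      by_cases h1 : m = i
      · rw [h1, hwi]; ring
      by_cases h2 : m = j
      · rw [h2, hwj]; ring
      · exact hwz 0 m h1 h2
    have hloc : IsLocalMin (fun t => proxObj α x (w t)) 0 := by
      filter_upwards [eventually_abs_sub_lt (0:ℝ) hm0] with t ht
      show proxObj α x (w 0) ≤ proxObj α x (w t)
      rw [hw0]
      exact hmin (w t) (hmem t (by simpa using ht))
    have hd : HasDerivAt (fun t => proxObj α x (w t))
        (Gaux α (x i) (z i) - Gaux α (x j) (z j)) 0 := by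
      have hfi : HasDerivAt (fun t : ℝ => Faux α (x i) (z i + t)) (Gaux α (x i) (z i)) 0 := by
        have h0 : HasDerivAt (fun t : ℝ => z i + t) 1 0 := (hasDerivAt_id 0).const_add (z i)
        have hp : HasDerivAt (fun t => Faux α (x i) t) (Gaux α (x i) (z i))
            ((fun t : ℝ => z i + t) 0) := by
          simpa using Faux_hasDerivAt (α := α) (a := x i) (hpos i).ne'
        have := hp.comp 0 h0
        rw [mul_one] at this
        exact this
      have hfj : HasDerivAt (fun t : ℝ => Faux α (x j) (z j - t)) (-(Gaux α (x j) (z j))) 0 := by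
        have h0 : HasDerivAt (fun t : ℝ => z j - t) (-1) 0 := (hasDerivAt_id 0).const_sub (z j)
        have hp : HasDerivAt (fun t => Faux α (x j) t) (Gaux α (x j) (z j))
            ((fun t : ℝ => z j - t) 0) := by
          simpa using Faux_hasDerivAt (α := α) (a := x j) (hpos j).ne'
        have := hp.comp 0 h0
        rw [mul_neg_one] at this
        exact this
      have hfun : (fun t => proxObj α x (w t)) =
          fun t => (Faux α (x i) (z i + t) + Faux α (x j) (z j - t)) +
            (proxObj α x z - Faux α (x i) (z i) - Faux α (x j) (z j)) :=
        funext hkey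
      rw [hfun]
      have hder := (hfi.add hfj).add_const
        (proxObj α x z - Faux α (x i) (z i) - Faux α (x j) (z j))
      have hre : Gaux α (x i) (z i) - Gaux α (x j) (z j) =
          Gaux α (x i) (z i) + -(Gaux α (x j) (z j)) := by ring
      rw [hre]
      exact hder
    have := hloc.hasDerivAt_eq_zero hd
    linarith
  constructor
  · refine ⟨Gaux α (x ⟨0, hk⟩) (z ⟨0, hk⟩), fun i => ?_, fun l hl => ?_⟩
    · have := hstat i ⟨0, hk⟩
      unfold Gaux at this ⊢
      linarith
    · have := hl ⟨0, hk⟩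
      unfold Gaux
      linarith
  · rintro v hv hvs ⟨lam, hlam⟩
    have hG : ∀ m, Gaux α (x m) (v m) = lam := by
      intro m; have := hlam m; unfold Gaux; linarith
    have hvmem : v ∈ simplex k := ⟨fun m => (hv m).le, hvs⟩
    have hvmin : ∀ u ∈ simplex k, proxObj α x v ≤ proxObj α x u := by
      intro u hu
      rw [proxObj_eq, proxObj_eq]
      calc ∑ m, Faux α (x m) (v m)
          = ∑ m, (Faux α (x m) (v m) + Gaux α (x m) (v m) * (u m - v m)) := by
            rw [Finset.sum_add_distrib]
            have h0 : ∑ m, Gaux α (x m) (v m) * (u m - v m) = 0 := by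
              have hcong : ∀ m ∈ Finset.univ, Gaux α (x m) (v m) * (u m - v m) =
                  lam * u m - lam * v m := fun m _ => by rw [hG m]; ring
              rw [Finset.sum_congr rfl hcong, Finset.sum_sub_distrib, ← Finset.mul_sum,
                ← Finset.mul_sum, hvs, hu.2]
              ring
            rw [h0, add_zero]
        _ ≤ ∑ m, Faux α (x m) (u m) :=
            Finset.sum_le_sum fun m _ => grad_ineq hα0 hα1 (hv m) (hu.1 m)
    by_contra hne
    obtain ⟨m0, hm0⟩ := Function.ne_iff.mp hne
    set u : Fin k → ℝ := fun m => (v m + z m) / 2 with hu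
    have humem : u ∈ simplex k := by
      constructor
      · intro m
        have := hv m; have := hz0 m
        simp only [hu]; linarith
      · simp only [hu]
        rw [← Finset.sum_div, Finset.sum_add_distrib, hvs, hz1]
        norm_num
    have hPeq : proxObj α x v = proxObj α x z :=
      le_antisymm (hvmin z ⟨hz0, hz1⟩) (hmin v hvmem)
    have hlt : proxObj α x u < proxObj α x z := by
      rw [proxObj_eq, proxObj_eq]
      have hsum : ∑ m, Faux α (x m) (u m) <
          ∑ m, (Faux α (x m) (v m) + Faux α (x m) (z m)) / 2 := by
        refine Finset.sum_lt_sum (fun m _ => mid_le hα0 hα1 (hz0 m) (hv m).le)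
          ⟨m0, Finset.mem_univ _, mid_lt hα0 hα1 (hz0 m0) (hv m0).le hm0⟩
      have heq : ∑ m, (Faux α (x m) (v m) + Faux α (x m) (z m)) / 2 =
          ∑ m, Faux α (x m) (z m) := by
        rw [← Finset.sum_div, Finset.sum_add_distrib, ← proxObj_eq, ← proxObj_eq, hPeq]
        ring_nf
      calc ∑ m, Faux α (x m) (u m) < _ := hsum
        _ = _ := heq
    have := hmin u humem
    linarith
end

section
/- Let α ∈ (0,1), let W ∈ ℝ^{k × k}, let b ∈ ℝ^k, and let z ∈ Δ_k. Then z is the unique minimizer over Δ_k of w ↦ P_α((1−α)z + α(Wz + b), w) if and only if z = softmax(Wz + b). In other words, the fixed points of the damped prox iteration coincide exactly with the mean-field fixed points. -/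
open Matrix

/-- The softmax function on ℝ^k. -/
noncomputable def softmax {k : ℕ} (x : Fin k → ℝ) : Fin k → ℝ :=
  fun i => Real.exp (x i) / ∑ j, Real.exp (x j)

/-!
Write `x = (1 - α) z + α u` with `u = W z + b`, and `v = softmax u`, so that
`log v = u - log Σ exp u`. Completing the square in the prox objective gives, for `w, z ∈ Δ_k`,

  `P_α(x, w) - P_α(x, z) = (1 - α)/2 ‖w - z‖² + α (KL(w ‖ v) - KL(z ‖ v))`.

If `z = v` the right-hand side is positive for `w ≠ z` by Gibbs' inequality. If `z ≠ v`, then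
`KL(z ‖ v) > 0`, and along the segment `w_t = (1 - t) z + t v` convexity of `KL(· ‖ v)` bounds the
right-hand side by `(1 - α)/2 t² ‖v - z‖² - α t KL(z ‖ v)`, which is negative for small `t > 0`.
-/

open Real Finset InformationTheory

noncomputable def relEntropy {k : ℕ} (w v : Fin k → ℝ) : ℝ :=
  ∑ i, (w i * log (w i) - w i * log (v i))

lemma convex_simplex (k : ℕ) : Convex ℝ (simplex k) := convex_stdSimplex ℝ (Fin k)

lemma nonempty_of_mem_simplex {k : ℕ} {z : Fin k → ℝ} (hz : z ∈ simplex k) : Nonempty (Fin k) :=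
  let ⟨i, _⟩ := exists_ne_zero_of_sum_ne_zero (hz.2 ▸ one_ne_zero : ∑ i, z i ≠ 0)
  ⟨i⟩

lemma sum_sub_eq_zero_of_mem_simplex {k : ℕ} {w z : Fin k → ℝ} (hw : w ∈ simplex k)
    (hz : z ∈ simplex k) : ∑ i, (w i - z i) = 0 := by
  rw [sum_sub_distrib, hw.2, hz.2, sub_self]

lemma sum_sq_sub_pos {k : ℕ} {w z : Fin k → ℝ} (h : w ≠ z) : 0 < ∑ i, (w i - z i) ^ 2 := by
  obtain ⟨i, hi⟩ := Function.ne_iff.1 h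
  exact sum_pos' (fun _ _ => sq_nonneg _) ⟨i, mem_univ _, sq_pos_of_ne_zero (sub_ne_zero.2 hi)⟩

lemma exists_mul_sq_lt_mul {a : ℝ} (ha : 0 < a) (c : ℝ) :
    ∃ t ∈ Set.Ioc (0 : ℝ) 1, c * t ^ 2 < a * t := by
  have hden : 0 < a + |c| := by positivity
  refine ⟨a / (a + |c|), ⟨by positivity, div_le_one_of_le₀ (by linarith [abs_nonneg c]) hden.le⟩,
    ?_⟩
  have hct : c * (a / (a + |c|)) < a := by
    rw [mul_div_assoc', div_lt_iff₀ hden]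
    nlinarith [le_abs_self c]
  nlinarith [mul_lt_mul_of_pos_left hct (show 0 < a / (a + |c|) by positivity)]

lemma mul_log_sub_mul_log_eq_mul_klFun {a b : ℝ} (ha : 0 ≤ a) (hb : 0 < b) :
    a * log a - a * log b = a - b + b * klFun (a / b) := by
  rcases ha.eq_or_lt with rfl | ha
  · simp [klFun_zero]
  · rw [klFun_apply, log_div ha.ne' hb.ne']
    field_simp
    ring

lemma mul_klFun_div_nonneg {a b : ℝ} (ha : 0 ≤ a) (hb : 0 < b) : 0 ≤ b * klFun (a / b) :=
  mul_nonneg hb.le (klFun_nonneg (div_nonneg ha hb.le))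

section RelEntropy

variable {k : ℕ} {w v : Fin k → ℝ}

lemma relEntropy_self : relEntropy v v = 0 := by
  simp [relEntropy]

lemma relEntropy_eq_sum_mul_klFun (hw : w ∈ simplex k) (hv : v ∈ simplex k) (hv0 : ∀ i, 0 < v i) :
    relEntropy w v = ∑ i, v i * klFun (w i / v i) := by
  simp only [relEntropy, fun i => mul_log_sub_mul_log_eq_mul_klFun (hw.1 i) (hv0 i),
    sum_add_distrib, sum_sub_eq_zero_of_mem_simplex hw hv, zero_add]

lemma relEntropy_nonneg (hw : w ∈ simplex k) (hv : v ∈ simplex k) (hv0 : ∀ i, 0 < v i) :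
    0 ≤ relEntropy w v := by
  rw [relEntropy_eq_sum_mul_klFun hw hv hv0]
  exact sum_nonneg fun i _ => mul_klFun_div_nonneg (hw.1 i) (hv0 i)

lemma relEntropy_pos (hw : w ∈ simplex k) (hv : v ∈ simplex k) (hv0 : ∀ i, 0 < v i)
    (hwv : w ≠ v) : 0 < relEntropy w v := by
  rw [relEntropy_eq_sum_mul_klFun hw hv hv0]
  obtain ⟨i, hi⟩ := Function.ne_iff.1 hwv
  refine sum_pos' (fun j _ => mul_klFun_div_nonneg (hw.1 j) (hv0 j)) ⟨i, mem_univ _, ?_⟩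
  have hwi := div_nonneg (hw.1 i) (hv0 i).le
  refine mul_pos (hv0 i) ((klFun_nonneg hwi).lt_of_ne' ?_)
  rwa [Ne, klFun_eq_zero_iff hwi, div_eq_one_iff_eq (hv0 i).ne']

lemma convexOn_relEntropy (v : Fin k → ℝ) : ConvexOn ℝ (Set.Ici 0) (relEntropy · v) := by
  refine ⟨convex_Ici 0, fun x hx y hy a b ha hb hab => ?_⟩
  simp only [relEntropy, smul_eq_mul, mul_sum, ← sum_add_distrib]
  refine sum_le_sum fun i _ => ?_
  have hconv := Real.convexOn_mul_log.2 (Set.mem_Ici.2 (hx i)) (Set.mem_Ici.2 (hy i)) ha hb hab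
  simp only [Pi.add_apply, Pi.smul_apply, smul_eq_mul] at hconv ⊢
  nlinarith

end RelEntropy

section Softmax

variable {k : ℕ} [Nonempty (Fin k)] (u : Fin k → ℝ)

lemma sum_exp_pos : 0 < ∑ j, exp (u j) :=
  sum_pos (fun _ _ => exp_pos _) univ_nonempty

lemma softmax_pos (i : Fin k) : 0 < softmax u i :=
  div_pos (exp_pos _) (sum_exp_pos u)

lemma softmax_mem_simplex : softmax u ∈ simplex k := by
  refine ⟨fun i => (softmax_pos u i).le, ?_⟩
  simp only [softmax, ← sum_div]
  exact div_self (sum_exp_pos u).ne'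

lemma log_softmax (i : Fin k) : log (softmax u i) = u i - log (∑ j, exp (u j)) := by
  rw [softmax, log_div (exp_pos _).ne' (sum_exp_pos u).ne', log_exp]

end Softmax

section DampedProx

variable {k : ℕ} {α : ℝ} {u w z : Fin k → ℝ}

lemma proxObj_sub_proxObj (α : ℝ) (u : Fin k → ℝ) (hw : w ∈ simplex k) (hz : z ∈ simplex k) :
    proxObj α (fun i => (1 - α) * z i + α * u i) w
        - proxObj α (fun i => (1 - α) * z i + α * u i) z =
      (1 - α) / 2 * ∑ i, (w i - z i) ^ 2
        + α * (relEntropy w (softmax u) - relEntropy z (softmax u)) := by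
  have := nonempty_of_mem_simplex hz
  calc _ = (1 - α) / 2 * ∑ i, (w i - z i) ^ 2
          + α * (relEntropy w (softmax u) - relEntropy z (softmax u))
          - α * log (∑ j, exp (u j)) * ∑ i, (w i - z i) := by
        simp only [proxObj, relEntropy, log_softmax, mul_sum, ← sum_sub_distrib, ← sum_add_distrib]
        exact sum_congr rfl fun i _ => by ring
    _ = _ := by rw [sum_sub_eq_zero_of_mem_simplex hw hz, mul_zero, sub_zero]

lemma proxObj_lt_of_eq_softmax (hα : α ∈ Set.Ioo (0 : ℝ) 1) (hz : z ∈ simplex k)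
    (hzu : z = softmax u) :
    ∀ w ∈ simplex k, w ≠ z →
      proxObj α (fun i => (1 - α) * z i + α * u i) z
        < proxObj α (fun i => (1 - α) * z i + α * u i) w := by
  intro w hw hwz
  have := nonempty_of_mem_simplex hz
  have hz0 : ∀ i, 0 < z i := hzu ▸ softmax_pos u
  rw [← sub_pos, proxObj_sub_proxObj α u hw hz, ← hzu, relEntropy_self, sub_zero]
  exact add_pos_of_pos_of_nonneg (mul_pos (by linarith [hα.2]) (sum_sq_sub_pos hwz))
    (mul_nonneg hα.1.le (relEntropy_nonneg hw hz hz0))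

lemma exists_proxObj_lt_of_ne_softmax (hα : α ∈ Set.Ioo (0 : ℝ) 1) (hz : z ∈ simplex k)
    (hzu : z ≠ softmax u) :
    ∃ w ∈ simplex k, w ≠ z ∧
      proxObj α (fun i => (1 - α) * z i + α * u i) w
        < proxObj α (fun i => (1 - α) * z i + α * u i) z := by
  have := nonempty_of_mem_simplex hz
  set v := softmax u
  have hv := softmax_mem_simplex u
  obtain ⟨t, ⟨ht0, ht1⟩, hquad⟩ := exists_mul_sq_lt_mul
    (mul_pos hα.1 (relEntropy_pos hz hv (softmax_pos u) hzu)) ((1 - α) / 2 * ∑ i, (v i - z i) ^ 2)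
  set w := (1 - t) • z + t • v
  have hw : w ∈ simplex k := convex_simplex k hz hv (by linarith) ht0.le (by ring)
  have hwz : ∀ i, w i - z i = t * (v i - z i) := fun i => by simp [w]; ring
  have hKw : relEntropy w v ≤ (1 - t) * relEntropy z v := by
    simpa [relEntropy_self] using
      (convexOn_relEntropy v).2 (show 0 ≤ z from hz.1) (show 0 ≤ v from hv.1)
        (by linarith) ht0.le (by ring)
  refine ⟨w, hw, fun h => hzu (funext fun i => ?_), ?_⟩
  · have := hwz i
    rw [h, sub_self, eq_comm, mul_eq_zero] at this
    exact (sub_eq_zero.1 (this.resolve_left ht0.ne')).symm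
  · rw [← sub_neg, proxObj_sub_proxObj α u hw hz]
    simp only [hwz, mul_pow, ← mul_sum]
    nlinarith [mul_le_mul_of_nonneg_left hKw hα.1.le]

end DampedProx

theorem stmt15_general {k : ℕ} (α : ℝ) (hα : α ∈ Set.Ioo (0 : ℝ) 1)
    (W : Matrix (Fin k) (Fin k) ℝ) (b : Fin k → ℝ)
    (z : Fin k → ℝ) (hz : z ∈ simplex k) :
    (∀ w ∈ simplex k, w ≠ z →
        proxObj α (fun i => (1 - α) * z i + α * (W.mulVec z i + b i)) z <
          proxObj α (fun i => (1 - α) * z i + α * (W.mulVec z i + b i)) w) ↔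
      z = softmax (fun i => W.mulVec z i + b i) := by
  refine ⟨fun hmin => ?_, proxObj_lt_of_eq_softmax hα hz⟩
  by_contra hzu
  obtain ⟨w, hw, hwz, hlt⟩ := exists_proxObj_lt_of_ne_softmax hα hz hzu
  exact lt_asymm hlt (hmin w hw hwz)

theorem stmt15 {k : ℕ} (hk : 0 < k) (α : ℝ) (hα : α ∈ Set.Ioo (0 : ℝ) 1)
    (W : Matrix (Fin k) (Fin k) ℝ) (b : Fin k → ℝ)
    (z : Fin k → ℝ) (hz : z ∈ simplex k) :
    (∀ w ∈ simplex k, w ≠ z →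
        proxObj α (fun i => (1 - α) * z i + α * (W.mulVec z i + b i)) z <
          proxObj α (fun i => (1 - α) * z i + α * (W.mulVec z i + b i)) w) ↔
      z = softmax (fun i => W.mulVec z i + b i) :=
  stmt15_general α hα W b z hz
end
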